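/- arXiv:1702.07397 — 8 statements merged into one kernel-verified Lean document; each statement's English description precedes it below -/
import Mathlib

section
/- Let h>0, β>1, and 0<s<s₀ where s₀=h(β²-1)/(β(β²+1)). Then for every 0<k≤1, the quantity β²s²k²(β²+1)²/(β²-k²)² - h² is negative; consequently there is no x∈ℝ² with βB(s,x)/A(s,x)=k, where A(s,x)=sqrt((x₁+β²s)²+x₂²+h²), B(s,x)=sqrt((x₁-s)²+x₂²+h²). -/
/-- For s below the threshold s₀ and 0 < k ≤ 1 the circle C(s,k) is empty. -/
theorem stmt_4 (h β s : ℝ) (hh : 0 < h) (hβ : 1 < β) (hs : 0 < s)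
    (hs0 : s < h * (β ^ 2 - 1) / (β * (β ^ 2 + 1))) :
    ∀ k : ℝ, 0 < k → k ≤ 1 →
      (β ^ 2 * s ^ 2 * k ^ 2 * (β ^ 2 + 1) ^ 2 / (β ^ 2 - k ^ 2) ^ 2 - h ^ 2 < 0) ∧
      ¬ ∃ x₁ x₂ : ℝ,
          β * Real.sqrt ((x₁ - s) ^ 2 + x₂ ^ 2 + h ^ 2)
            / Real.sqrt ((x₁ + β ^ 2 * s) ^ 2 + x₂ ^ 2 + h ^ 2) = k := by
  intro k hk hk1
  have hβpos : 0 < β := lt_trans one_pos hβ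
  have hden : 0 < β * (β ^ 2 + 1) := by positivity
  have hs0' : s * (β * (β ^ 2 + 1)) < h * (β ^ 2 - 1) := by
    rwa [← lt_div_iff₀ hden]
  have hβ2k : k ^ 2 < β ^ 2 := by nlinarith
  have hsub : 0 < β ^ 2 - k ^ 2 := sub_pos.mpr hβ2k
  have hsq : 0 < (β ^ 2 - k ^ 2) ^ 2 := pow_pos hsub 2
  have hab : β * s * k * (β ^ 2 + 1) < h * (β ^ 2 - k ^ 2) := by
    have h1 : k * (β ^ 2 - 1) ≤ β ^ 2 - k ^ 2 := by nlinarith [mul_nonneg (sub_nonneg.mpr hk1) (by positivity : (0:ℝ) ≤ β ^ 2 + k)]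
    have h2 : β * s * k * (β ^ 2 + 1) < h * (k * (β ^ 2 - 1)) := by nlinarith
    nlinarith
  have hapos : 0 < β * s * k * (β ^ 2 + 1) := by positivity
  have hkey : β ^ 2 * s ^ 2 * k ^ 2 * (β ^ 2 + 1) ^ 2 - h ^ 2 * (β ^ 2 - k ^ 2) ^ 2 < 0 := by
    nlinarith [mul_lt_mul' hab.le hab hapos.le (mul_pos hh hsub)]
  constructor
  · rw [sub_neg, div_lt_iff₀ hsq]
    nlinarith
  · rintro ⟨x₁, x₂, hx⟩
    set P := (x₁ - s) ^ 2 + x₂ ^ 2 + h ^ 2 with hP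
    set Q := (x₁ + β ^ 2 * s) ^ 2 + x₂ ^ 2 + h ^ 2 with hQ
    have hPpos : 0 < P := by positivity
    have hQpos : 0 < Q := by positivity
    have hQs : 0 < Real.sqrt Q := Real.sqrt_pos.mpr hQpos
    have hx' : β * Real.sqrt P = k * Real.sqrt Q := by
      field_simp at hx
      linarith [hx]
    have hsq' : β ^ 2 * P = k ^ 2 * Q := by
      have := congrArg (· ^ 2) hx'
      simp only [mul_pow] at this
      rw [Real.sq_sqrt hPpos.le, Real.sq_sqrt hQpos.le] at this
      exact this
    rw [hP, hQ] at hsq'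
    nlinarith [sq_nonneg ((β ^ 2 - k ^ 2) * x₁ - β ^ 2 * s * (1 + k ^ 2)), sq_nonneg x₂,
      mul_nonneg (sq_nonneg x₂) hsq.le, hkey]
end

section
/- Let h>0, β>1, s>0, and 0<k<β with r(s,k)²:=β²s²k²(β²+1)²/(β²-k²)² - h² > 0. Define x_r(k) = β²s(1+k²)/(β²-k²) + sqrt(β²s²k²(β²+1)²/(β²-k²)² - h²). Then k ↦ x_r(k) is strictly increasing on the set of such k. -/
/-- The right endpoint x_r(k) of the circle C(s,k) is strictly increasing in k. -/
theorem stmt_5 (h β s : ℝ) (hh : 0 < h) (hβ : 1 < β) (hs : 0 < s) :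
    ∀ k₁ k₂ : ℝ, 0 < k₁ → k₁ < k₂ → k₂ < β →
      0 < β ^ 2 * s ^ 2 * k₁ ^ 2 * (β ^ 2 + 1) ^ 2 / (β ^ 2 - k₁ ^ 2) ^ 2 - h ^ 2 →
      0 < β ^ 2 * s ^ 2 * k₂ ^ 2 * (β ^ 2 + 1) ^ 2 / (β ^ 2 - k₂ ^ 2) ^ 2 - h ^ 2 →
      β ^ 2 * s * (1 + k₁ ^ 2) / (β ^ 2 - k₁ ^ 2)
          + Real.sqrt (β ^ 2 * s ^ 2 * k₁ ^ 2 * (β ^ 2 + 1) ^ 2 / (β ^ 2 - k₁ ^ 2) ^ 2 - h ^ 2)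
        < β ^ 2 * s * (1 + k₂ ^ 2) / (β ^ 2 - k₂ ^ 2)
          + Real.sqrt (β ^ 2 * s ^ 2 * k₂ ^ 2 * (β ^ 2 + 1) ^ 2 / (β ^ 2 - k₂ ^ 2) ^ 2 - h ^ 2) := by
  intro k₁ k₂ hk1 hk12 hk2b hr1 hr2
  have hb2 : 0 < β ^ 2 - k₂ ^ 2 := by nlinarith
  have hb1 : 0 < β ^ 2 - k₁ ^ 2 := by nlinarith
  have hβ2 : (0:ℝ) < β ^ 2 := by positivity
  have hksq : k₁ ^ 2 < k₂ ^ 2 := by nlinarith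
  have hcenter : β ^ 2 * s * (1 + k₁ ^ 2) / (β ^ 2 - k₁ ^ 2)
      < β ^ 2 * s * (1 + k₂ ^ 2) / (β ^ 2 - k₂ ^ 2) := by
    rw [div_lt_div_iff₀ hb1 hb2]
    nlinarith [mul_pos (mul_pos (mul_pos hβ2 hs) (sub_pos.2 hksq))
      (by positivity : (0:ℝ) < β ^ 2 + 1)]
  have hkey : k₁ * (β ^ 2 - k₂ ^ 2) < k₂ * (β ^ 2 - k₁ ^ 2) := by
    nlinarith [mul_pos (sub_pos.2 hk12) (add_pos hβ2 (mul_pos hk1 (hk1.trans hk12)))]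
  have hrad : β ^ 2 * s ^ 2 * k₁ ^ 2 * (β ^ 2 + 1) ^ 2 / (β ^ 2 - k₁ ^ 2) ^ 2
      < β ^ 2 * s ^ 2 * k₂ ^ 2 * (β ^ 2 + 1) ^ 2 / (β ^ 2 - k₂ ^ 2) ^ 2 := by
    rw [div_lt_div_iff₀ (by positivity) (by positivity)]
    have h1 : 0 < k₁ * (β ^ 2 - k₂ ^ 2) := mul_pos hk1 hb2
    have hsq : (k₁ * (β ^ 2 - k₂ ^ 2)) ^ 2 < (k₂ * (β ^ 2 - k₁ ^ 2)) ^ 2 := by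
      nlinarith
    have hpos : (0:ℝ) < β ^ 2 * s ^ 2 * (β ^ 2 + 1) ^ 2 := by positivity
    nlinarith [mul_lt_mul_of_pos_left hsq hpos]
  have hsqrt := Real.sqrt_lt_sqrt hr1.le (sub_lt_sub_right hrad (h ^ 2))
  linarith
end

section
/- Let h>0, β>1, s>0, and 0<k<β with β²s²k²(β²+1)²/(β²-k²)² - h² > 0. Define x_ℓ(k) = β²s(1+k²)/(β²-k²) - sqrt(β²s²k²(β²+1)²/(β²-k²)² - h²). Then the derivative x_ℓ'(k) satisfies x_ℓ'(k) ≤ -(β²s(β²+1)/((β²-k²)²β))·(β-k)² < 0; in particular x_ℓ is strictly decreasing in k. -/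
lemma xell_deriv (h β s : ℝ) (hβ : 1 < β) (hs : 0 < s)
    (k : ℝ) (hk0 : 0 < k) (hkβ : k < β)
    (hB : 0 < β ^ 2 * s ^ 2 * k ^ 2 * (β ^ 2 + 1) ^ 2 / (β ^ 2 - k ^ 2) ^ 2 - h ^ 2) :
    ∃ d : ℝ, HasDerivAt (fun k : ℝ => β ^ 2 * s * (1 + k ^ 2) / (β ^ 2 - k ^ 2)
        - Real.sqrt (β ^ 2 * s ^ 2 * k ^ 2 * (β ^ 2 + 1) ^ 2 / (β ^ 2 - k ^ 2) ^ 2 - h ^ 2)) d k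
      ∧ d ≤ -(β ^ 2 * s * (β ^ 2 + 1) / ((β ^ 2 - k ^ 2) ^ 2 * β)) * (β - k) ^ 2 := by
  have hD : (0:ℝ) < β ^ 2 - k ^ 2 := by nlinarith
  have hDne : (β ^ 2 - k ^ 2) ≠ 0 := ne_of_gt hD
  have hsq : HasDerivAt (fun x : ℝ => x ^ 2) (2 * k) k := by
    simpa using hasDerivAt_pow 2 k
  -- A part
  have hAnum : HasDerivAt (fun x : ℝ => β ^ 2 * s * (1 + x ^ 2)) (β ^ 2 * s * (2 * k)) k :=
    (hsq.const_add 1).const_mul (β ^ 2 * s)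
  have hden : HasDerivAt (fun x : ℝ => β ^ 2 - x ^ 2) (-(2 * k)) k := hsq.const_sub (β ^ 2)
  have hA : HasDerivAt (fun x : ℝ => β ^ 2 * s * (1 + x ^ 2) / (β ^ 2 - x ^ 2))
      ((β ^ 2 * s * (2 * k) * (β ^ 2 - k ^ 2) - β ^ 2 * s * (1 + k ^ 2) * (-(2 * k)))
        / (β ^ 2 - k ^ 2) ^ 2) k := hAnum.div hden hDne
  -- B part
  have hBnum : HasDerivAt (fun x : ℝ => β ^ 2 * s ^ 2 * x ^ 2 * (β ^ 2 + 1) ^ 2)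
      (β ^ 2 * s ^ 2 * (2 * k) * (β ^ 2 + 1) ^ 2) k := by
    exact (hsq.const_mul (β ^ 2 * s ^ 2)).mul_const ((β ^ 2 + 1) ^ 2)
  have hBden : HasDerivAt (fun x : ℝ => (β ^ 2 - x ^ 2) ^ 2)
      (2 * (β ^ 2 - k ^ 2) * (-(2 * k))) k := by
    simpa using hden.fun_pow 2
  have hBdiv : HasDerivAt (fun x : ℝ => β ^ 2 * s ^ 2 * x ^ 2 * (β ^ 2 + 1) ^ 2 / (β ^ 2 - x ^ 2) ^ 2)
      ((β ^ 2 * s ^ 2 * (2 * k) * (β ^ 2 + 1) ^ 2 * (β ^ 2 - k ^ 2) ^ 2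
        - β ^ 2 * s ^ 2 * k ^ 2 * (β ^ 2 + 1) ^ 2 * (2 * (β ^ 2 - k ^ 2) * (-(2 * k))))
        / ((β ^ 2 - k ^ 2) ^ 2) ^ 2) k := hBnum.div hBden (pow_ne_zero 2 hDne)
  have hBfun : HasDerivAt (fun x : ℝ => β ^ 2 * s ^ 2 * x ^ 2 * (β ^ 2 + 1) ^ 2 / (β ^ 2 - x ^ 2) ^ 2 - h ^ 2)
      ((β ^ 2 * s ^ 2 * (2 * k) * (β ^ 2 + 1) ^ 2 * (β ^ 2 - k ^ 2) ^ 2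
        - β ^ 2 * s ^ 2 * k ^ 2 * (β ^ 2 + 1) ^ 2 * (2 * (β ^ 2 - k ^ 2) * (-(2 * k))))
        / ((β ^ 2 - k ^ 2) ^ 2) ^ 2) k := hBdiv.sub_const (h ^ 2)
  set Bk : ℝ := β ^ 2 * s ^ 2 * k ^ 2 * (β ^ 2 + 1) ^ 2 / (β ^ 2 - k ^ 2) ^ 2 - h ^ 2 with hBk
  set B' : ℝ := (β ^ 2 * s ^ 2 * (2 * k) * (β ^ 2 + 1) ^ 2 * (β ^ 2 - k ^ 2) ^ 2
        - β ^ 2 * s ^ 2 * k ^ 2 * (β ^ 2 + 1) ^ 2 * (2 * (β ^ 2 - k ^ 2) * (-(2 * k))))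
        / ((β ^ 2 - k ^ 2) ^ 2) ^ 2 with hB'
  have hsqrtB : HasDerivAt (fun x : ℝ =>
      Real.sqrt (β ^ 2 * s ^ 2 * x ^ 2 * (β ^ 2 + 1) ^ 2 / (β ^ 2 - x ^ 2) ^ 2 - h ^ 2))
      (B' / (2 * Real.sqrt Bk)) k := by
    have h1 := (Real.hasDerivAt_sqrt (ne_of_gt hB)).comp k hBfun
    exact h1.congr_deriv (by ring)
  have hf : HasDerivAt (fun k : ℝ => β ^ 2 * s * (1 + k ^ 2) / (β ^ 2 - k ^ 2)
        - Real.sqrt (β ^ 2 * s ^ 2 * k ^ 2 * (β ^ 2 + 1) ^ 2 / (β ^ 2 - k ^ 2) ^ 2 - h ^ 2))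
      ((β ^ 2 * s * (2 * k) * (β ^ 2 - k ^ 2) - β ^ 2 * s * (1 + k ^ 2) * (-(2 * k)))
        / (β ^ 2 - k ^ 2) ^ 2 - B' / (2 * Real.sqrt Bk)) k := hA.sub hsqrtB
  refine ⟨_, hf, ?_⟩
  -- now the bound
  set R : ℝ := Real.sqrt Bk with hR
  have hRpos : 0 < R := Real.sqrt_pos.mpr hB
  set g : ℝ := β * s * k * (β ^ 2 + 1) / (β ^ 2 - k ^ 2) with hg
  have hgpos : 0 < g := by positivity
  have hg' : (0:ℝ) < β * s * (β ^ 2 + 1) * (β ^ 2 + k ^ 2) / (β ^ 2 - k ^ 2) ^ 2 := by positivity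
  set G' : ℝ := β * s * (β ^ 2 + 1) * (β ^ 2 + k ^ 2) / (β ^ 2 - k ^ 2) ^ 2 with hG'
  have hRle : R ≤ g := by
    have h1 : Bk ≤ g ^ 2 := by
      rw [hBk, hg]
      have : (β * s * k * (β ^ 2 + 1) / (β ^ 2 - k ^ 2)) ^ 2
          = β ^ 2 * s ^ 2 * k ^ 2 * (β ^ 2 + 1) ^ 2 / (β ^ 2 - k ^ 2) ^ 2 := by
        field_simp
      nlinarith [sq_nonneg h]
    calc R ≤ Real.sqrt (g ^ 2) := Real.sqrt_le_sqrt h1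
    _ = g := Real.sqrt_sq hgpos.le
  -- B' = 2 * g * G'
  have hB'eq : B' = 2 * g * G' := by
    rw [hB', hg, hG']
    field_simp
    ring
  have hstep1 : B' / (2 * R) = g * G' / R := by
    rw [hB'eq]; field_simp
  have hstep2 : G' ≤ g * G' / R := by
    rw [le_div_iff₀ hRpos]
    nlinarith
  have hfinal : (β ^ 2 * s * (2 * k) * (β ^ 2 - k ^ 2) - β ^ 2 * s * (1 + k ^ 2) * (-(2 * k)))
        / (β ^ 2 - k ^ 2) ^ 2 - G'
      = -(β ^ 2 * s * (β ^ 2 + 1) / ((β ^ 2 - k ^ 2) ^ 2 * β)) * (β - k) ^ 2 := by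
    rw [hG']
    have hbne : β ≠ 0 := by positivity
    field_simp
    ring
  rw [hstep1]
  linarith [hstep2]

lemma B_mono (h β s k t : ℝ) (hβ : 1 < β) (hs : 0 < s) (hk0 : 0 < k) (hkt : k ≤ t) (htβ : t < β)
    (hB : 0 < β ^ 2 * s ^ 2 * k ^ 2 * (β ^ 2 + 1) ^ 2 / (β ^ 2 - k ^ 2) ^ 2 - h ^ 2) :
    0 < β ^ 2 * s ^ 2 * t ^ 2 * (β ^ 2 + 1) ^ 2 / (β ^ 2 - t ^ 2) ^ 2 - h ^ 2 := by
  have hkβ : k < β := lt_of_le_of_lt hkt htβ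
  have hDk : (0:ℝ) < β ^ 2 - k ^ 2 := by nlinarith
  have hDt : (0:ℝ) < β ^ 2 - t ^ 2 := by nlinarith
  have key : β ^ 2 * s ^ 2 * k ^ 2 * (β ^ 2 + 1) ^ 2 / (β ^ 2 - k ^ 2) ^ 2
      ≤ β ^ 2 * s ^ 2 * t ^ 2 * (β ^ 2 + 1) ^ 2 / (β ^ 2 - t ^ 2) ^ 2 := by
    rw [div_le_div_iff₀ (by positivity) (by positivity)]
    have h1 : k * (β ^ 2 - t ^ 2) ≤ t * (β ^ 2 - k ^ 2) := by
      nlinarith [mul_nonneg (sub_nonneg.mpr hkt) (sq_nonneg β),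
        mul_nonneg (sub_nonneg.mpr hkt) (mul_nonneg hk0.le (hk0.trans_le hkt).le)]
    have h2 : (0:ℝ) ≤ k * (β ^ 2 - t ^ 2) := by positivity
    have h3 := mul_le_mul h1 h1 h2 (le_trans h2 h1)
    have h4 := mul_le_mul_of_nonneg_left h3
      (show (0:ℝ) ≤ β ^ 2 * s ^ 2 * (β ^ 2 + 1) ^ 2 by positivity)
    nlinarith [h4]
  linarith

/-- The left endpoint x_ℓ(k) of the circle C(s,k) has negative derivative and is
strictly decreasing. -/
theorem stmt_6 (h β s : ℝ) (hh : 0 < h) (hβ : 1 < β) (hs : 0 < s) :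
    ∀ k : ℝ, 0 < k → k < β →
      0 < β ^ 2 * s ^ 2 * k ^ 2 * (β ^ 2 + 1) ^ 2 / (β ^ 2 - k ^ 2) ^ 2 - h ^ 2 →
      (deriv (fun k : ℝ => β ^ 2 * s * (1 + k ^ 2) / (β ^ 2 - k ^ 2)
            - Real.sqrt (β ^ 2 * s ^ 2 * k ^ 2 * (β ^ 2 + 1) ^ 2 / (β ^ 2 - k ^ 2) ^ 2 - h ^ 2)) k
          ≤ -(β ^ 2 * s * (β ^ 2 + 1) / ((β ^ 2 - k ^ 2) ^ 2 * β)) * (β - k) ^ 2) ∧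
      (-(β ^ 2 * s * (β ^ 2 + 1) / ((β ^ 2 - k ^ 2) ^ 2 * β)) * (β - k) ^ 2 < 0) ∧
      (∀ k' : ℝ, k < k' → k' < β →
        0 < β ^ 2 * s ^ 2 * k' ^ 2 * (β ^ 2 + 1) ^ 2 / (β ^ 2 - k' ^ 2) ^ 2 - h ^ 2 →
        β ^ 2 * s * (1 + k' ^ 2) / (β ^ 2 - k' ^ 2)
            - Real.sqrt (β ^ 2 * s ^ 2 * k' ^ 2 * (β ^ 2 + 1) ^ 2 / (β ^ 2 - k' ^ 2) ^ 2 - h ^ 2)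
          < β ^ 2 * s * (1 + k ^ 2) / (β ^ 2 - k ^ 2)
            - Real.sqrt (β ^ 2 * s ^ 2 * k ^ 2 * (β ^ 2 + 1) ^ 2 / (β ^ 2 - k ^ 2) ^ 2 - h ^ 2)) := by
  intro k hk0 hkβ hB
  have bound_neg : ∀ t : ℝ, 0 < t → t < β →
      -(β ^ 2 * s * (β ^ 2 + 1) / ((β ^ 2 - t ^ 2) ^ 2 * β)) * (β - t) ^ 2 < 0 := by
    intro t ht0 htβ
    have hD : (0:ℝ) < β ^ 2 - t ^ 2 := by nlinarith
    have hbt : (0:ℝ) < β - t := by linarith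
    have : 0 < (β ^ 2 * s * (β ^ 2 + 1) / ((β ^ 2 - t ^ 2) ^ 2 * β)) * (β - t) ^ 2 := by
      positivity
    linarith
  obtain ⟨d, hd, hdle⟩ := xell_deriv h β s hβ hs k hk0 hkβ hB
  refine ⟨by rw [hd.deriv]; exact hdle, bound_neg k hk0 hkβ, ?_⟩
  intro k' hkk' hk'β hB'
  have hanti : StrictAntiOn (fun k : ℝ => β ^ 2 * s * (1 + k ^ 2) / (β ^ 2 - k ^ 2)
      - Real.sqrt (β ^ 2 * s ^ 2 * k ^ 2 * (β ^ 2 + 1) ^ 2 / (β ^ 2 - k ^ 2) ^ 2 - h ^ 2))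
      (Set.Icc k k') := by
    apply strictAntiOn_of_deriv_neg (convex_Icc k k')
    · intro t ht
      obtain ⟨ht1, ht2⟩ := ht
      have ht0 : 0 < t := lt_of_lt_of_le hk0 ht1
      have htβ : t < β := lt_of_le_of_lt ht2 hk'β
      obtain ⟨d', hd', _⟩ := xell_deriv h β s hβ hs t ht0 htβ
        (B_mono h β s k t hβ hs hk0 ht1 htβ hB)
      exact hd'.differentiableAt.continuousAt.continuousWithinAt
    · intro t ht
      rw [interior_Icc] at ht
      obtain ⟨ht1, ht2⟩ := ht
      have ht0 : 0 < t := lt_trans hk0 ht1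
      have htβ : t < β := lt_trans ht2 hk'β
      obtain ⟨d', hd', hle'⟩ := xell_deriv h β s hβ hs t ht0 htβ
        (B_mono h β s k t hβ hs hk0 ht1.le htβ hB)
      rw [hd'.deriv]
      exact lt_of_le_of_lt hle' (bound_neg t ht0 htβ)
  exact hanti (Set.left_mem_Icc.mpr hkk'.le) (Set.right_mem_Icc.mpr hkk'.le) hkk'
end

section
/- Let h>0, β>1, s>0, and let j,k satisfy 0<j<k<β with both circles C(s,j) and C(s,k) nonempty (i.e. β²s²m²(β²+1)²/(β²-m²)² - h² > 0 for m=j,k). Then the circle C(s,j) lies strictly inside the circle C(s,k): more precisely, x_ℓ(k) < x_ℓ(j) ≤ x_r(j) < x_r(k), where x_ℓ(m) and x_r(m) are the left and right x₁-intercepts of C(s,m). -/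
/-- The squared radius of the circle C(s,k). -/
noncomputable def rsq (h β s k : ℝ) : ℝ :=
  β ^ 2 * s ^ 2 * k ^ 2 * (β ^ 2 + 1) ^ 2 / (β ^ 2 - k ^ 2) ^ 2 - h ^ 2

/-- The left x₁-intercept of the circle C(s,k). -/
noncomputable def xLeft (h β s k : ℝ) : ℝ :=
  β ^ 2 * s * (1 + k ^ 2) / (β ^ 2 - k ^ 2) - Real.sqrt (rsq h β s k)

/-- The right x₁-intercept of the circle C(s,k). -/
noncomputable def xRight (h β s k : ℝ) : ℝ :=
  β ^ 2 * s * (1 + k ^ 2) / (β ^ 2 - k ^ 2) + Real.sqrt (rsq h β s k)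

lemma aux_rdiff (rj rk ρj ρk h : ℝ) (hrjpos : 0 < rj) (hrkpos : 0 < rk)
    (hρjk : ρj < ρk) (hrjρ : rj < ρj) (hrkρ : rk < ρk)
    (hrj2 : rj ^ 2 = ρj ^ 2 - h ^ 2) (hrk2 : rk ^ 2 = ρk ^ 2 - h ^ 2) :
    ρk - ρj < rk - rj := by
  nlinarith [mul_pos (sub_pos.mpr hρjk) (by linarith : (0:ℝ) < ρk + ρj - (rk + rj)),
    mul_pos hrjpos hrkpos]

set_option maxHeartbeats 1000000

/-- For 0 < j < k < β the circle C(s,j) lies strictly inside C(s,k). -/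
theorem stmt_7 (h β s j k : ℝ) (hh : 0 < h) (hβ : 1 < β) (hs : 0 < s)
    (hj : 0 < j) (hjk : j < k) (hk : k < β)
    (hrj : 0 < rsq h β s j) (hrk : 0 < rsq h β s k) :
    xLeft h β s k < xLeft h β s j ∧ xLeft h β s j ≤ xRight h β s j ∧
      xRight h β s j < xRight h β s k := by
  have hβ0 : (0:ℝ) < β := lt_trans one_pos hβ
  have hjβ : j < β := hjk.trans hk
  have hDj : 0 < β ^ 2 - j ^ 2 := by nlinarith
  have hDk : 0 < β ^ 2 - k ^ 2 := by nlinarith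
  set ρj : ℝ := β * s * j * (β ^ 2 + 1) / (β ^ 2 - j ^ 2) with hρjdef
  set ρk : ℝ := β * s * k * (β ^ 2 + 1) / (β ^ 2 - k ^ 2) with hρkdef
  have hρjpos : 0 < ρj :=
    div_pos (mul_pos (mul_pos (mul_pos hβ0 hs) hj) (by positivity)) hDj
  have hρkpos : 0 < ρk :=
    div_pos (mul_pos (mul_pos (mul_pos hβ0 hs) (hj.trans hjk)) (by positivity)) hDk
  have hρjk : ρj < ρk := by
    rw [hρjdef, hρkdef, div_lt_div_iff₀ hDj hDk]
    have key : β * s * k * (β ^ 2 + 1) * (β ^ 2 - j ^ 2)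
        - β * s * j * (β ^ 2 + 1) * (β ^ 2 - k ^ 2)
        = β * s * (β ^ 2 + 1) * ((k - j) * (β ^ 2 + j * k)) := by ring
    have pos : 0 < β * s * (β ^ 2 + 1) * ((k - j) * (β ^ 2 + j * k)) :=
      mul_pos (mul_pos (mul_pos hβ0 hs) (by positivity))
        (mul_pos (sub_pos.mpr hjk) (add_pos (by positivity) (mul_pos hj (hj.trans hjk))))
    linarith
  have hρj2 : ρj ^ 2 = β ^ 2 * s ^ 2 * j ^ 2 * (β ^ 2 + 1) ^ 2 / (β ^ 2 - j ^ 2) ^ 2 := by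
    rw [hρjdef, div_pow]; ring_nf
  have hρk2 : ρk ^ 2 = β ^ 2 * s ^ 2 * k ^ 2 * (β ^ 2 + 1) ^ 2 / (β ^ 2 - k ^ 2) ^ 2 := by
    rw [hρkdef, div_pow]; ring_nf
  have hrsqj : rsq h β s j = ρj ^ 2 - h ^ 2 := by rw [rsq, hρj2]
  have hrsqk : rsq h β s k = ρk ^ 2 - h ^ 2 := by rw [rsq, hρk2]
  set rj : ℝ := Real.sqrt (rsq h β s j) with hrjdef
  set rk : ℝ := Real.sqrt (rsq h β s k) with hrkdef
  have hrjpos : 0 < rj := Real.sqrt_pos.mpr hrj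
  have hrkpos : 0 < rk := Real.sqrt_pos.mpr hrk
  have hrj2 : rj ^ 2 = ρj ^ 2 - h ^ 2 := by
    rw [hrjdef, Real.sq_sqrt hrj.le, hrsqj]
  have hrk2 : rk ^ 2 = ρk ^ 2 - h ^ 2 := by
    rw [hrkdef, Real.sq_sqrt hrk.le, hrsqk]
  have hrjρ : rj < ρj :=
    lt_of_pow_lt_pow_left₀ 2 hρjpos.le (by nlinarith : rj ^ 2 < ρj ^ 2)
  have hrkρ : rk < ρk :=
    lt_of_pow_lt_pow_left₀ 2 hρkpos.le (by nlinarith : rk ^ 2 < ρk ^ 2)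
  have hrjk : rj < rk := by
    have hρ2 : ρj ^ 2 < ρk ^ 2 := pow_lt_pow_left₀ hρjk hρjpos.le (by norm_num)
    exact lt_of_pow_lt_pow_left₀ 2 hrkpos.le (by linarith : rj ^ 2 < rk ^ 2)
  -- centers
  have hcjk : β ^ 2 * s * (1 + j ^ 2) / (β ^ 2 - j ^ 2)
      < β ^ 2 * s * (1 + k ^ 2) / (β ^ 2 - k ^ 2) := by
    rw [div_lt_div_iff₀ hDj hDk]
    have key : β ^ 2 * s * (1 + k ^ 2) * (β ^ 2 - j ^ 2)
        - β ^ 2 * s * (1 + j ^ 2) * (β ^ 2 - k ^ 2)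
        = β ^ 2 * s * ((k ^ 2 - j ^ 2) * (1 + β ^ 2)) := by ring
    have pos : 0 < β ^ 2 * s * ((k ^ 2 - j ^ 2) * (1 + β ^ 2)) := by
      have hsq : j ^ 2 < k ^ 2 := pow_lt_pow_left₀ hjk hj.le (by norm_num)
      exact mul_pos (mul_pos (by positivity) hs)
        (mul_pos (sub_pos.mpr hsq) (by positivity))
    linarith
  -- c - ρ is decreasing
  have hcρ : β ^ 2 * s * (1 + k ^ 2) / (β ^ 2 - k ^ 2) - ρk
      < β ^ 2 * s * (1 + j ^ 2) / (β ^ 2 - j ^ 2) - ρj := by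
    rw [hρjdef, hρkdef, div_sub_div _ _ (ne_of_gt hDk) (ne_of_gt hDk),
      div_sub_div _ _ (ne_of_gt hDj) (ne_of_gt hDj), div_lt_div_iff₀ (by positivity) (by positivity)]
    have key : (β ^ 2 * s * (1 + j ^ 2) * (β ^ 2 - j ^ 2) - (β ^ 2 - j ^ 2) * (β * s * j * (β ^ 2 + 1)))
          * ((β ^ 2 - k ^ 2) * (β ^ 2 - k ^ 2))
        - (β ^ 2 * s * (1 + k ^ 2) * (β ^ 2 - k ^ 2) - (β ^ 2 - k ^ 2) * (β * s * k * (β ^ 2 + 1)))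
          * ((β ^ 2 - j ^ 2) * (β ^ 2 - j ^ 2))
        = (β ^ 2 - j ^ 2) * ((β ^ 2 - k ^ 2) * (β * s * ((β - j) * ((β - k) * ((k - j) * (β ^ 2 + 1)))))) := by
      ring
    have pos : 0 < (β ^ 2 - j ^ 2) * ((β ^ 2 - k ^ 2) * (β * s * ((β - j) * ((β - k) * ((k - j) * (β ^ 2 + 1)))))) :=
      mul_pos hDj (mul_pos hDk (mul_pos (mul_pos hβ0 hs)
        (mul_pos (sub_pos.mpr hjβ) (mul_pos (sub_pos.mpr hk)
          (mul_pos (sub_pos.mpr hjk) (by positivity))))))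
    linarith
  -- r(k) - r(j) > ρ(k) - ρ(j)
  have hrdiff : ρk - ρj < rk - rj :=
    aux_rdiff rj rk ρj ρk h hrjpos hrkpos hρjk hrjρ hrkρ hrj2 hrk2
  refine ⟨?_, ?_, ?_⟩
  · show _ - rk < _ - rj
    linarith
  · show _ - rj ≤ _ + rj
    linarith
  · show _ + rj < _ + rk
    linarith
end

section
/- Let h>0, α≥0 with α≠1, s>0, and x=(x₁,x₂)∈ℝ² with x ≠ ((α+1)s/2, 0). Let A=sqrt((x₁-αs)²+x₂²+h²), B=sqrt((x₁-s)²+x₂²+h²). Then the gradient with respect to x of the function A+B is nonzero, i.e. the vector ((x₁-αs)/A + (x₁-s)/B, x₂/A + x₂/B) is nonzero. -/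
/-- The gradient of the bistatic distance A + B is nonzero away from the point on
the ground directly between transmitter and receiver. -/
theorem stmt_9 (h α s x₁ x₂ : ℝ) (hh : 0 < h) (hα : 0 ≤ α) (hα1 : α ≠ 1)
    (hs : 0 < s) (hx : (x₁, x₂) ≠ ((α + 1) * s / 2, 0)) :
    ((x₁ - α * s) / Real.sqrt ((x₁ - α * s) ^ 2 + x₂ ^ 2 + h ^ 2)
        + (x₁ - s) / Real.sqrt ((x₁ - s) ^ 2 + x₂ ^ 2 + h ^ 2),
      x₂ / Real.sqrt ((x₁ - α * s) ^ 2 + x₂ ^ 2 + h ^ 2)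
        + x₂ / Real.sqrt ((x₁ - s) ^ 2 + x₂ ^ 2 + h ^ 2)) ≠ ((0 : ℝ), (0 : ℝ)) := by
  set u := x₁ - α * s with hu
  set v := x₁ - s with hv
  have hApos : (0:ℝ) < u ^ 2 + x₂ ^ 2 + h ^ 2 := by positivity
  have hBpos : (0:ℝ) < v ^ 2 + x₂ ^ 2 + h ^ 2 := by positivity
  set A := Real.sqrt (u ^ 2 + x₂ ^ 2 + h ^ 2) with hA
  set B := Real.sqrt (v ^ 2 + x₂ ^ 2 + h ^ 2) with hB
  have hA0 : 0 < A := Real.sqrt_pos.mpr hApos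
  have hB0 : 0 < B := Real.sqrt_pos.mpr hBpos
  have hA2 : A ^ 2 = u ^ 2 + x₂ ^ 2 + h ^ 2 := Real.sq_sqrt hApos.le
  have hB2 : B ^ 2 = v ^ 2 + x₂ ^ 2 + h ^ 2 := Real.sq_sqrt hBpos.le
  intro heq
  rw [Prod.mk.injEq] at heq
  obtain ⟨h1, h2⟩ := heq
  -- second component gives x₂ = 0
  have hx2 : x₂ = 0 := by
    have : x₂ * (1 / A + 1 / B) = 0 := by
      field_simp at h2 ⊢
      linarith [h2]
    rcases mul_eq_zero.mp this with h | h
    · exact h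
    · exfalso; nlinarith [one_div_pos.mpr hA0, one_div_pos.mpr hB0]
  -- first component: u*B + v*A = 0
  have h3 : u * B + v * A = 0 := by
    have := h1
    field_simp at this
    linarith
  -- squaring: u^2 = v^2
  have hsq : u ^ 2 = v ^ 2 := by
    have e : u * B = -(v * A) := by linarith
    have : (u * B) ^ 2 = (v * A) ^ 2 := by rw [e]; ring
    rw [mul_pow, mul_pow, hA2, hB2, hx2] at this
    have key : (u ^ 2 - v ^ 2) * h ^ 2 = 0 := by linear_combination this
    rcases mul_eq_zero.mp key with h' | h'
    · linarith
    · exact absurd h' (by positivity)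
  -- u - v = (1 - α) * s ≠ 0
  have huv : u - v = (1 - α) * s := by rw [hu, hv]; ring
  have hne : u - v ≠ 0 := by
    rw [huv]
    exact mul_ne_zero (sub_ne_zero.mpr fun hc => hα1 hc.symm) hs.ne'
  have : u + v = 0 := by
    have : (u - v) * (u + v) = 0 := by linear_combination hsq
    rcases mul_eq_zero.mp this with h | h
    · exact absurd h hne
    · exact h
  have hx1 : x₁ = (α + 1) * s / 2 := by rw [hu, hv] at this; linarith
  exact hx (by rw [hx1, hx2])
end

section
/- Let h>0, α∈ℝ, s>0, x=(x₁,x₂)∈ℝ². With γ_T=(αs,0,h), γ_R=(s,0,h), X=(x₁,x₂,0), A=‖X-γ_T‖, B=‖X-γ_R‖, one has 1 + ((γ_T-X)·(γ_R-X))/(AB) > 0. -/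
/-- The factor 1 + (γ_T - X)·(γ_R - X)/(AB) is always strictly positive. -/
theorem stmt_10 (h α s x₁ x₂ : ℝ) (hh : 0 < h) (hs : 0 < s) :
    0 < 1 + ((α * s - x₁) * (s - x₁) + x₂ ^ 2 + h ^ 2)
        / (Real.sqrt ((x₁ - α * s) ^ 2 + x₂ ^ 2 + h ^ 2)
            * Real.sqrt ((x₁ - s) ^ 2 + x₂ ^ 2 + h ^ 2)) := by
  set d : ℝ := (α * s - x₁) * (s - x₁) + x₂ ^ 2 + h ^ 2 with hd
  set A : ℝ := Real.sqrt ((x₁ - α * s) ^ 2 + x₂ ^ 2 + h ^ 2) with hA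
  set B : ℝ := Real.sqrt ((x₁ - s) ^ 2 + x₂ ^ 2 + h ^ 2) with hB
  have h1 : (0:ℝ) < (x₁ - α * s) ^ 2 + x₂ ^ 2 + h ^ 2 := by positivity
  have h2 : (0:ℝ) < (x₁ - s) ^ 2 + x₂ ^ 2 + h ^ 2 := by positivity
  have hApos : 0 < A := Real.sqrt_pos.mpr h1
  have hBpos : 0 < B := Real.sqrt_pos.mpr h2
  have hA2 : A ^ 2 = (x₁ - α * s) ^ 2 + x₂ ^ 2 + h ^ 2 := Real.sq_sqrt h1.le
  have hB2 : B ^ 2 = (x₁ - s) ^ 2 + x₂ ^ 2 + h ^ 2 := Real.sq_sqrt h2.le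
  have hAB : 0 < A * B := mul_pos hApos hBpos
  have key : -d < A * B := by
    rcases le_or_gt (-d) 0 with hle | hlt
    · exact lt_of_le_of_lt hle hAB
    · have hsq : (-d) ^ 2 < (A * B) ^ 2 := by
        have hlag : (A * B) ^ 2 = d ^ 2 + ((α * s - x₁) - (s - x₁)) ^ 2 * (x₂ ^ 2 + h ^ 2) := by
          rw [mul_pow, hA2, hB2, hd]; ring
        rcases eq_or_ne (α * s - x₁) (s - x₁) with heq | hne
        · exfalso
          have : 0 < d := by nlinarith [sq_nonneg (s - x₁)]
          linarith
        · have : 0 < ((α * s - x₁) - (s - x₁)) ^ 2 * (x₂ ^ 2 + h ^ 2) := by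
            have h3 : 0 < ((α * s - x₁) - (s - x₁)) ^ 2 := by
              have := sub_ne_zero.mpr hne
              positivity
            have h4 : 0 < x₂ ^ 2 + h ^ 2 := by positivity
            exact mul_pos h3 h4
          nlinarith
      exact lt_of_pow_lt_pow_left₀ 2 hAB.le hsq
  have hlt : -d / (A * B) < 1 := (div_lt_one hAB).mpr key
  rw [neg_div] at hlt
  linarith
end

section
/- Let α≥0, s>0, h>0 and x=(x₁,x₂) with x₂≠0, and set A=sqrt((x₁-αs)²+x₂²+h²), B=sqrt((x₁-s)²+x₂²+h²). Then for ω≠0, the quantity ω·x₂·(α/A² + 1/B²)·(1 + ((γ_T-X)·(γ_R-X))/(AB)) is nonzero, where γ_T=(αs,0,h), γ_R=(s,0,h), X=(x₁,x₂,0). In particular, for α≥0 the determinant of dπ_L vanishes exactly on {x₂=0}. -/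
lemma key_pos (a b c d : ℝ) (hd : 0 < d) :
    0 < 1 + (a * b + c ^ 2 + d ^ 2) /
        (Real.sqrt (a ^ 2 + c ^ 2 + d ^ 2) * Real.sqrt (b ^ 2 + c ^ 2 + d ^ 2)) := by
  set A := Real.sqrt (a ^ 2 + c ^ 2 + d ^ 2) with hA
  set B := Real.sqrt (b ^ 2 + c ^ 2 + d ^ 2) with hB
  have hA2 : A ^ 2 = a ^ 2 + c ^ 2 + d ^ 2 := Real.sq_sqrt (by positivity)
  have hB2 : B ^ 2 = b ^ 2 + c ^ 2 + d ^ 2 := Real.sq_sqrt (by positivity)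
  have hApos : 0 < A := Real.sqrt_pos.2 (by positivity)
  have hBpos : 0 < B := Real.sqrt_pos.2 (by positivity)
  have hAB : 0 < A * B := mul_pos hApos hBpos
  have hlag : (A * B) ^ 2 - (a * b + c ^ 2 + d ^ 2) ^ 2 = (a - b) ^ 2 * (c ^ 2 + d ^ 2) := by
    have : (A * B) ^ 2 = (a ^ 2 + c ^ 2 + d ^ 2) * (b ^ 2 + c ^ 2 + d ^ 2) := by
      rw [mul_pow, hA2, hB2]
    rw [this]; ring
  have hmain : 0 < A * B + (a * b + c ^ 2 + d ^ 2) := by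
    rcases le_or_gt 0 (a * b + c ^ 2 + d ^ 2) with ht | ht
    · linarith
    · by_contra hc
      push_neg at hc
      have h1 : (a * b + c ^ 2 + d ^ 2) ^ 2 ≥ (A * B) ^ 2 := by nlinarith
      have h2 : (a - b) ^ 2 * (c ^ 2 + d ^ 2) ≤ 0 := by linarith
      have h3 : (a - b) ^ 2 = 0 := by
        have hcd : 0 < c ^ 2 + d ^ 2 := by positivity
        nlinarith [sq_nonneg (a - b)]
      have hab : a = b := by nlinarith [sq_nonneg (a - b)]
      subst hab
      nlinarith [sq_nonneg a, sq_nonneg c]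
  have : 0 < (A * B + (a * b + c ^ 2 + d ^ 2)) / (A * B) := div_pos hmain hAB
  calc (0:ℝ) < (A * B + (a * b + c ^ 2 + d ^ 2)) / (A * B) := this
    _ = 1 + (a * b + c ^ 2 + d ^ 2) / (A * B) := by
        field_simp

/-- For α ≥ 0 the determinant of dπ_L vanishes exactly on {x₂ = 0}. -/
theorem stmt_11 (h α s ω x₁ x₂ : ℝ) (hh : 0 < h) (hα : 0 ≤ α) (hs : 0 < s)
    (hω : ω ≠ 0) :
    (x₂ ≠ 0 →
      ω * x₂ * (α / (Real.sqrt ((x₁ - α * s) ^ 2 + x₂ ^ 2 + h ^ 2)) ^ 2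
            + 1 / (Real.sqrt ((x₁ - s) ^ 2 + x₂ ^ 2 + h ^ 2)) ^ 2)
          * (1 + ((α * s - x₁) * (s - x₁) + x₂ ^ 2 + h ^ 2)
              / (Real.sqrt ((x₁ - α * s) ^ 2 + x₂ ^ 2 + h ^ 2)
                  * Real.sqrt ((x₁ - s) ^ 2 + x₂ ^ 2 + h ^ 2))) ≠ 0) ∧
    (ω * x₂ * (α / (Real.sqrt ((x₁ - α * s) ^ 2 + x₂ ^ 2 + h ^ 2)) ^ 2
            + 1 / (Real.sqrt ((x₁ - s) ^ 2 + x₂ ^ 2 + h ^ 2)) ^ 2)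
          * (1 + ((α * s - x₁) * (s - x₁) + x₂ ^ 2 + h ^ 2)
              / (Real.sqrt ((x₁ - α * s) ^ 2 + x₂ ^ 2 + h ^ 2)
                  * Real.sqrt ((x₁ - s) ^ 2 + x₂ ^ 2 + h ^ 2))) = 0 ↔ x₂ = 0) := by
  have hA2eq : (x₁ - α * s) ^ 2 + x₂ ^ 2 + h ^ 2
      = (α * s - x₁) ^ 2 + x₂ ^ 2 + h ^ 2 := by ring
  have hB2eq : (x₁ - s) ^ 2 + x₂ ^ 2 + h ^ 2 = (s - x₁) ^ 2 + x₂ ^ 2 + h ^ 2 := by ring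
  have hQ : 0 < 1 + ((α * s - x₁) * (s - x₁) + x₂ ^ 2 + h ^ 2)
      / (Real.sqrt ((x₁ - α * s) ^ 2 + x₂ ^ 2 + h ^ 2)
          * Real.sqrt ((x₁ - s) ^ 2 + x₂ ^ 2 + h ^ 2)) := by
    rw [hA2eq, hB2eq]
    exact key_pos (α * s - x₁) (s - x₁) x₂ h hh
  have hP : 0 < α / (Real.sqrt ((x₁ - α * s) ^ 2 + x₂ ^ 2 + h ^ 2)) ^ 2
      + 1 / (Real.sqrt ((x₁ - s) ^ 2 + x₂ ^ 2 + h ^ 2)) ^ 2 := by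
    have h1 : 0 ≤ α / (Real.sqrt ((x₁ - α * s) ^ 2 + x₂ ^ 2 + h ^ 2)) ^ 2 := by positivity
    have h2 : 0 < 1 / (Real.sqrt ((x₁ - s) ^ 2 + x₂ ^ 2 + h ^ 2)) ^ 2 := by
      have : 0 < Real.sqrt ((x₁ - s) ^ 2 + x₂ ^ 2 + h ^ 2) := Real.sqrt_pos.2 (by positivity)
      positivity
    linarith
  constructor
  · intro hx2
    exact mul_ne_zero (mul_ne_zero (mul_ne_zero hω hx2) (ne_of_gt hP)) (ne_of_gt hQ)
  · constructor
    · intro hz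
      by_contra hx2
      exact (mul_ne_zero (mul_ne_zero (mul_ne_zero hω hx2) (ne_of_gt hP)) (ne_of_gt hQ)) hz
    · intro hx2; rw [hx2]; ring
end

section
/- Let α≥0, ρ>0, and φ,φ'∈(0,π). Then (α+1)(cosh²ρ + cos φ·cos φ') - (α-1)·cosh ρ·(cos φ + cos φ') > 0. In particular, the equation (α+1)(cosh²ρ + cos φ cos φ') - (α-1) cosh ρ (cos φ + cos φ') = 0 has no solutions when α≥0. -/
/-- For α ≥ 0 the artifact relation C₂ is empty: the defining quantity is strictly
positive. -/
theorem stmt_13 (α ρ φ φ' : ℝ) (hα : 0 ≤ α) (hρ : 0 < ρ)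
    (hφ : φ ∈ Set.Ioo 0 Real.pi) (hφ' : φ' ∈ Set.Ioo 0 Real.pi) :
    0 < (α + 1) * ((Real.cosh ρ) ^ 2 + Real.cos φ * Real.cos φ')
        - (α - 1) * Real.cosh ρ * (Real.cos φ + Real.cos φ') := by
  have hc : 1 < Real.cosh ρ := by
    rw [Real.one_lt_cosh]; exact hρ.ne'
  have h1 : -1 ≤ Real.cos φ := Real.neg_one_le_cos φ
  have h2 : Real.cos φ ≤ 1 := Real.cos_le_one φ
  have h3 : -1 ≤ Real.cos φ' := Real.neg_one_le_cos φ'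
  have h4 : Real.cos φ' ≤ 1 := Real.cos_le_one φ'
  nlinarith [mul_nonneg hα (mul_nonneg (by linarith : (0:ℝ) ≤ Real.cosh ρ - Real.cos φ) (by linarith : (0:ℝ) ≤ Real.cosh ρ - Real.cos φ')),
    mul_pos (by linarith : (0:ℝ) < Real.cosh ρ + Real.cos φ) (by linarith : (0:ℝ) < Real.cosh ρ + Real.cos φ')]
end
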